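/- For c₃ ∈ [0, 1/2], the 4×4 matrix with rows (1/4, 1/4, c₃, 1/2−c₃), (1/4, 1/4, 1/2−c₃, c₃), (1/4, c₃, 1/2−c₃, 1/4), (1/4, 1/2−c₃, c₃, 1/4) is doubly stochastic with eigenvalues 1, 0, −(4c₃−1)/8 + i·√7(4c₃−1)/8, and −(4c₃−1)/8 − i·√7(4c₃−1)/8. -/

import Mathlib

open Polynomial

def IsDoublyStochastic {n : ℕ} (A : Matrix (Fin n) (Fin n) ℝ) : Prop :=
  (∀ i j, 0 ≤ A i j) ∧ (∀ i, ∑ j, A i j = 1) ∧ (∀ j, ∑ i, A i j = 1)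

/-- The generic matrix of class C₉ with first row (1/4, 1/4, c₃, 1/2 − c₃). -/
noncomputable def Mmat (c₃ : ℝ) : Matrix (Fin 4) (Fin 4) ℝ :=
  !![1/4, 1/4, c₃, 1/2 - c₃;
     1/4, 1/4, 1/2 - c₃, c₃;
     1/4, c₃, 1/2 - c₃, 1/4;
     1/4, 1/2 - c₃, c₃, 1/4]

/-!
Expanding the determinant, the real characteristic polynomial of `Mmat c₃` is
`(X - 1) X (X² - ((1 - 4c₃)/4) X + (4c₃ - 1)²/8)`. The quadratic factor has discriminant
`-7 (4c₃ - 1)² / 16`, so over `ℂ` its roots are the conjugate pair `a ± b i` with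
`a = -(4c₃ - 1)/8` and `b = √7 (4c₃ - 1)/8`: indeed `2a = (1 - 4c₃)/4` and `a² + b² = (4c₃ - 1)²/8`.
-/

namespace Matrix

theorem det_fin_four {R : Type*} [CommRing R] (A : Matrix (Fin 4) (Fin 4) R) :
    A.det =
      A 0 0 * A 1 1 * A 2 2 * A 3 3 - A 0 0 * A 1 1 * A 2 3 * A 3 2 -
      A 0 0 * A 1 2 * A 2 1 * A 3 3 + A 0 0 * A 1 2 * A 2 3 * A 3 1 +
      A 0 0 * A 1 3 * A 2 1 * A 3 2 - A 0 0 * A 1 3 * A 2 2 * A 3 1 -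
      A 0 1 * A 1 0 * A 2 2 * A 3 3 + A 0 1 * A 1 0 * A 2 3 * A 3 2 +
      A 0 1 * A 1 2 * A 2 0 * A 3 3 - A 0 1 * A 1 2 * A 2 3 * A 3 0 -
      A 0 1 * A 1 3 * A 2 0 * A 3 2 + A 0 1 * A 1 3 * A 2 2 * A 3 0 +
      A 0 2 * A 1 0 * A 2 1 * A 3 3 - A 0 2 * A 1 0 * A 2 3 * A 3 1 -
      A 0 2 * A 1 1 * A 2 0 * A 3 3 + A 0 2 * A 1 1 * A 2 3 * A 3 0 +
      A 0 2 * A 1 3 * A 2 0 * A 3 1 - A 0 2 * A 1 3 * A 2 1 * A 3 0 -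
      A 0 3 * A 1 0 * A 2 1 * A 3 2 + A 0 3 * A 1 0 * A 2 2 * A 3 1 +
      A 0 3 * A 1 1 * A 2 0 * A 3 2 - A 0 3 * A 1 1 * A 2 2 * A 3 0 -
      A 0 3 * A 1 2 * A 2 0 * A 3 1 + A 0 3 * A 1 2 * A 2 1 * A 3 0 := by
  rw [det_succ_row_zero]
  simp only [Fin.sum_univ_four, det_fin_three, submatrix_apply, Fin.succAbove, Fin.reduceLT,
    Fin.reduceCastSucc, Fin.reduceSucc, Fin.isValue, ↓reduceIte, Fin.coe_ofNat_eq_mod]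
  ring

end Matrix

theorem Polynomial.X_sub_C_mul_X_sub_C {R : Type*} [CommRing R] (z w : R) :
    (X - C z) * (X - C w) = X ^ 2 - C (z + w) * X + C (z * w) := by
  simp only [C_add, C_mul]
  ring

theorem Complex.ofReal_add_mul_I_mul_ofReal_sub_mul_I (a b : ℝ) :
    ((a : ℂ) + b * I) * (a - b * I) = ((a ^ 2 + b ^ 2 : ℝ) : ℂ) := by
  push_cast
  linear_combination (-(b : ℂ) ^ 2) * I_sq

section Mmat

open Matrix

theorem isDoublyStochastic_Mmat {c₃ : ℝ} (hc : c₃ ∈ Set.Icc (0 : ℝ) (1 / 2)) :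
    IsDoublyStochastic (Mmat c₃) := by
  obtain ⟨h0, h1⟩ := hc
  refine ⟨fun i j => ?_, fun i => ?_, fun j => ?_⟩
  · fin_cases i <;> fin_cases j <;>
      simp only [Mmat, of_apply, cons_val, Fin.isValue, Fin.zero_eta, Fin.mk_one,
        Fin.reduceFinMk] <;> linarith
  · fin_cases i <;>
      simp only [Mmat, Fin.sum_univ_four, of_apply, cons_val, Fin.isValue, Fin.zero_eta,
        Fin.mk_one, Fin.reduceFinMk] <;> ring
  · fin_cases j <;>
      simp only [Mmat, Fin.sum_univ_four, of_apply, cons_val, Fin.isValue, Fin.zero_eta,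
        Fin.mk_one, Fin.reduceFinMk] <;> ring

theorem charpoly_Mmat (c₃ : ℝ) :
    (Mmat c₃).charpoly =
      (X - C 1) * X * (X ^ 2 - C ((1 - 4 * c₃) / 4) * X + C ((4 * c₃ - 1) ^ 2 / 8)) := by
  rw [charpoly, det_fin_four]
  refine Polynomial.funext fun x => ?_
  simp only [Mmat, charmatrix_apply, of_apply, cons_val, Fin.isValue, diagonal_apply,
    Fin.reduceEq, ↓reduceIte, eval_mul, eval_sub, eval_add, eval_X, eval_C, eval_pow, eval_zero]
  ring

end Mmat

theorem stmt12 (c₃ : ℝ) (hc : c₃ ∈ Set.Icc (0 : ℝ) (1 / 2)) :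
    IsDoublyStochastic (Mmat c₃) ∧
    ((Mmat c₃).map (fun r => (r : ℂ))).charpoly =
      (X - C 1) * X *
        (X - C (((-(4 * c₃ - 1) / 8 : ℝ) : ℂ) +
          ((Real.sqrt 7 * (4 * c₃ - 1) / 8 : ℝ) : ℂ) * Complex.I)) *
        (X - C (((-(4 * c₃ - 1) / 8 : ℝ) : ℂ) -
          ((Real.sqrt 7 * (4 * c₃ - 1) / 8 : ℝ) : ℂ) * Complex.I)) := by
  refine ⟨isDoublyStochastic_Mmat hc, ?_⟩
  have hsum : -(4 * c₃ - 1) / 8 + -(4 * c₃ - 1) / 8 = (1 - 4 * c₃) / 4 := by ring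
  have hnormSq : (-(4 * c₃ - 1) / 8) ^ 2 + (Real.sqrt 7 * (4 * c₃ - 1) / 8) ^ 2
      = (4 * c₃ - 1) ^ 2 / 8 := by
    rw [mul_div_assoc, mul_pow, Real.sq_sqrt (by norm_num)]
    ring
  rw [mul_assoc _ (X - C _), X_sub_C_mul_X_sub_C, add_add_sub_cancel, ← Complex.ofReal_add, hsum,
    Complex.ofReal_add_mul_I_mul_ofReal_sub_mul_I, hnormSq]
  refine (Matrix.charpoly_map (Mmat c₃) Complex.ofRealHom).trans ?_
  simp [charpoly_Mmat]
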